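/- (Comparison lemma.) Let T₁ > 0, let f ∈ L¹(0,T₁) with f ≥ 0 a.e., let K ≥ 0 and C₀ > 0. Let X, B : [0,T₁] → [0, e⁻¹] be absolutely continuous functions such that X(0) ≤ B(0), X′(t) ≤ C₀ f(t) X(t)( |ln X(t)| + K ) for a.e. t, and B′(t) = C₀ f(t) B(t)( |ln B(t)| + K ) for a.e. t (with the convention 0·|ln 0| = 0). Then X(t) ≤ B(t) for all t ∈ [0,T₁]. -/

import Mathlib

/-!
Reparametrising time by `τ = ∫₀ᵗ f` turns the equation into the autonomous `u' = C₀ u (K - log u)`,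
whose flow is explicit since `K - log u` decays like `exp (-C₀ τ)`. As `w ↦ w (K - log w)` is
nondecreasing on `[0, e⁻¹]`, a subsolution starting strictly below a supersolution stays strictly
below it: up to the first contact time the rate of the subsolution is the smaller one. So `X` lies
below the explicit solutions starting just above `X 0`, these lie below `B` when they start below
`B 0`, and letting both initial values tend to `B 0` gives `X ≤ B`.
-/

open MeasureTheory Set Real

theorem LipschitzOnWith.comp_absolutelyContinuousOnInterval {X Y : Type*} [PseudoMetricSpace X]
    [PseudoMetricSpace Y] {g : X → Y} {f : ℝ → X} {K : NNReal} {s : Set X} {a b : ℝ}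
    (hg : LipschitzOnWith K g s) (hf : AbsolutelyContinuousOnInterval f a b)
    (hfs : MapsTo f (uIcc a b) s) : AbsolutelyContinuousOnInterval (g ∘ f) a b := by
  rw [absolutelyContinuousOnInterval_iff] at hf ⊢
  intro ε hε
  obtain ⟨δ, hδ, hfδ⟩ := hf (ε / (K + 1)) (by positivity)
  refine ⟨δ, hδ, fun E hE hlen => ?_⟩
  calc ∑ i ∈ Finset.range E.1, dist (g (f (E.2 i).1)) (g (f (E.2 i).2))
      ≤ ∑ i ∈ Finset.range E.1, K * dist (f (E.2 i).1) (f (E.2 i).2) :=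
        Finset.sum_le_sum fun i hi =>
          hg.dist_le_mul _ (hfs (hE.1 i hi).1) _ (hfs (hE.1 i hi).2)
    _ = K * ∑ i ∈ Finset.range E.1, dist (f (E.2 i).1) (f (E.2 i).2) := by rw [Finset.mul_sum]
    _ ≤ K * (ε / (K + 1)) := by gcongr; exact (hfδ E hE hlen).le
    _ < ε := by rw [mul_div_assoc', div_lt_iff₀ (by positivity)]; nlinarith

theorem intervalIntegral.integral_comp_primitive_mul {f Φ Φ' : ℝ → ℝ} {a b : ℝ}
    (hf : IntervalIntegrable f volume a b) (hΦ : ∀ y, HasDerivAt Φ (Φ' y) y)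
    (hΦ' : Continuous Φ') :
    ∫ x in a..b, Φ' (∫ v in a..x, f v) * f x = Φ (∫ v in a..b, f v) - Φ 0 := by
  set G : ℝ → ℝ := fun x => ∫ v in a..x, f v
  have hG : AbsolutelyContinuousOnInterval G a b :=
    hf.absolutelyContinuousOnInterval_intervalIntegral left_mem_uIcc
  have hΦ_C1 : ContDiff ℝ 1 Φ := by
    rw [contDiff_one_iff_deriv]
    refine ⟨fun y => (hΦ y).differentiableAt, ?_⟩
    rwa [funext fun y => (hΦ y).deriv]
  obtain ⟨K, hK⟩ := (hΦ_C1.locallyLipschitz.locallyLipschitzOn).exists_lipschitzOnWith_of_compact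
    (isCompact_uIcc.image_of_continuousOn hG.continuousOn)
  have hΦG := hK.comp_absolutelyContinuousOnInterval hG (mapsTo_image G _)
  have hGa : G a = 0 := intervalIntegral.integral_same
  calc ∫ x in a..b, Φ' (G x) * f x = ∫ x in a..b, deriv (Φ ∘ G) x := by
        refine intervalIntegral.integral_congr_ae ?_
        filter_upwards [hf.ae_hasDerivAt_integral] with x hx hxab
        exact ((hΦ (G x)).comp x (hx (uIoc_subset_uIcc hxab) a left_mem_uIcc)).deriv.symm
    _ = Φ (G b) - Φ 0 := by rw [hΦG.integral_deriv_eq_sub, Function.comp_apply,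
        Function.comp_apply, hGa]

theorem subsolution_lt_supersolution {ρ g X Y : ℝ → ℝ} {T a c : ℝ}
    (hρ : ∀ᵐ r ∂(volume.restrict (Ioc 0 T)), 0 ≤ ρ r)
    (hg_mono : MonotoneOn g (Icc a c)) (hg_nonneg : ∀ w ∈ Icc a c, 0 ≤ g w)
    (hX_cont : ContinuousOn X (Icc 0 T)) (hY_cont : ContinuousOn Y (Icc 0 T))
    (hXa : ∀ t ∈ Icc 0 T, a ≤ X t) (hYc : ∀ t ∈ Icc 0 T, Y t ≤ c)
    (hY_int : IntegrableOn (fun r => ρ r * g (Y r)) (Ioc 0 T))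
    (hX : ∀ t ∈ Icc 0 T, X t - X 0 ≤ ∫ r in Ioc 0 t, ρ r * g (X r))
    (hY : ∀ t ∈ Icc 0 T, ∫ r in Ioc 0 t, ρ r * g (Y r) ≤ Y t - Y 0)
    (h0 : X 0 < Y 0) :
    ∀ t ∈ Icc 0 T, X t < Y t := by
  intro t ht
  by_contra! hYX
  set S := {s ∈ Icc 0 T | Y s ≤ X s}
  have hS_bdd : BddBelow S := bddBelow_Icc.mono (sep_subset _ _)
  obtain ⟨ht₀, hYX₀⟩ : sInf S ∈ S :=
    (isClosed_Icc.isClosed_le hY_cont hX_cont).csInf_mem ⟨t, ht, hYX⟩ hS_bdd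
  set t₀ := sInf S
  have hbefore : ∀ r ∈ Ioo 0 t₀, X r ∈ Icc a c ∧ Y r ∈ Icc a c ∧ X r ≤ Y r := by
    intro r hr
    have hrT : r ∈ Icc 0 T := ⟨hr.1.le, hr.2.le.trans ht₀.2⟩
    have hXY : X r < Y r := by
      by_contra! h
      exact (csInf_le hS_bdd ⟨hrT, h⟩).not_gt hr.2
    exact ⟨⟨hXa r hrT, hXY.le.trans (hYc r hrT)⟩, ⟨(hXa r hrT).trans hXY.le, hYc r hrT⟩, hXY.le⟩
  have hρ₀ : ∀ᵐ r ∂(volume.restrict (Ioo 0 t₀)), 0 ≤ ρ r :=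
    ae_restrict_of_ae_restrict_of_subset (Ioo_subset_Ioc_self.trans (Ioc_subset_Ioc_right ht₀.2)) hρ
  have hint : ∫ r in Ioc 0 t₀, ρ r * g (X r) ≤ ∫ r in Ioc 0 t₀, ρ r * g (Y r) := by
    rw [integral_Ioc_eq_integral_Ioo, integral_Ioc_eq_integral_Ioo]
    refine integral_mono_of_nonneg ?_
      (hY_int.mono_set (Ioo_subset_Ioc_self.trans (Ioc_subset_Ioc_right ht₀.2))) ?_
    · filter_upwards [ae_restrict_mem measurableSet_Ioo, hρ₀] with r hr hρr
      exact mul_nonneg hρr (hg_nonneg _ (hbefore r hr).1)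
    · filter_upwards [ae_restrict_mem measurableSet_Ioo, hρ₀] with r hr hρr
      obtain ⟨hXr, hYr, hXY⟩ := hbefore r hr
      exact mul_le_mul_of_nonneg_left (hg_mono hXr hYr hXY) hρr
  linarith [hX t₀ ht₀, hY t₀ ht₀]

/-- The flow of `u' = C₀ u (K - log u)`, written with `rpow` so that it is continuous in `w` down
to `w = 0`. -/
noncomputable def logFlow (K C₀ τ w : ℝ) : ℝ :=
  exp (K * (1 - exp (-(C₀ * τ)))) * w ^ exp (-(C₀ * τ))

section logFlow

variable {K C₀ τ w : ℝ}

theorem logFlow_eq_exp (hw : 0 < w) :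
    logFlow K C₀ τ w = exp (K - (K - log w) * exp (-(C₀ * τ))) := by
  rw [logFlow, rpow_def_of_pos hw, ← exp_add]
  ring_nf

@[simp] theorem logFlow_time_zero (K C₀ w : ℝ) : logFlow K C₀ 0 w = w := by
  simp [logFlow]

theorem logFlow_nonneg (hw : 0 ≤ w) : 0 ≤ logFlow K C₀ τ w := by
  unfold logFlow; positivity

theorem continuous_logFlow (K C₀ τ : ℝ) : Continuous (logFlow K C₀ τ) :=
  continuous_const.mul (continuous_id.rpow_const fun _ => Or.inr (exp_pos _).le)

theorem logFlow_zero (K C₀ τ : ℝ) : logFlow K C₀ τ 0 = 0 := by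
  simp [logFlow, zero_rpow (exp_pos _).ne']

theorem sub_log_logFlow (hw : 0 < w) :
    K - log (logFlow K C₀ τ w) = (K - log w) * exp (-(C₀ * τ)) := by
  rw [logFlow_eq_exp hw, log_exp]; ring

theorem hasDerivAt_logFlow (hw : 0 < w) (K C₀ τ : ℝ) :
    HasDerivAt (fun τ => logFlow K C₀ τ w)
      (C₀ * (logFlow K C₀ τ w * (K - log (logFlow K C₀ τ w)))) τ := by
  simp_rw [sub_log_logFlow hw, logFlow_eq_exp hw]
  have h := (((((hasDerivAt_id τ).const_mul C₀).neg).exp).const_mul (K - log w)).const_sub K |>.exp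
  simp only [Pi.neg_apply, id] at h
  convert h using 1
  ring

theorem continuous_logFlow_time (hw : 0 < w) (K C₀ : ℝ) :
    Continuous fun τ => logFlow K C₀ τ w := by
  simp_rw [logFlow_eq_exp hw]
  fun_prop

theorem continuous_logFlow_mul_sub_log (hw : 0 < w) (K C₀ : ℝ) :
    Continuous fun τ => logFlow K C₀ τ w * (K - log (logFlow K C₀ τ w)) := by
  simp_rw [sub_log_logFlow hw, logFlow_eq_exp hw]
  fun_prop

theorem monotone_logFlow_time (hC₀ : 0 ≤ C₀) (hw : 0 < w) (hwK : w ≤ exp K) :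
    Monotone fun τ => logFlow K C₀ τ w := by
  intro τ τ' hττ'
  simp only [logFlow_eq_exp hw]
  have hA : 0 ≤ K - log w := by linarith [(log_le_iff_le_exp hw).2 hwK]
  gcongr

end logFlow

section rate

variable {K w : ℝ}

theorem exp_neg_one_lt_one : exp (-1) < 1 :=
  exp_lt_one_iff.2 (by norm_num)

theorem continuous_mul_sub_log (K : ℝ) : Continuous fun w => w * (K - log w) := by
  simp_rw [mul_sub]
  exact (continuous_id.mul continuous_const).sub continuous_mul_log

theorem monotoneOn_mul_sub_log (hK : 0 ≤ K) :
    MonotoneOn (fun w => w * (K - log w)) (Icc 0 (exp (-1))) := by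
  intro x hx y hy hxy
  have := mul_log_strictAntiOn.antitoneOn hx hy hxy
  simp only at this ⊢
  nlinarith

theorem mul_sub_log_nonneg (hK : 0 ≤ K) (hw₀ : 0 ≤ w) (hw₁ : w ≤ 1) : 0 ≤ w * (K - log w) :=
  mul_nonneg hw₀ (by linarith [log_nonpos hw₀ hw₁])

theorem mul_abs_log_add (hw₀ : 0 ≤ w) (hw₁ : w ≤ 1) : w * (|log w| + K) = w * (K - log w) := by
  rw [abs_of_nonpos (log_nonpos hw₀ hw₁)]; ring

theorem setIntegral_mul_abs_log_add {ρ Z : ℝ → ℝ} {t : ℝ} (hZ : ∀ r ∈ Ioc 0 t, Z r ∈ Icc 0 1) :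
    ∫ r in Ioc 0 t, ρ r * (Z r * (|log (Z r)| + K)) = ∫ r in Ioc 0 t, ρ r * (Z r * (K - log (Z r))) :=
  setIntegral_congr_fun measurableSet_Ioc fun r hr => by
    rw [mul_abs_log_add (hZ r hr).1 (hZ r hr).2]

end rate

section primitive

variable {f : ℝ → ℝ} {K C₀ T w : ℝ}

theorem logFlow_primitive_sub (hw : 0 < w) {t : ℝ} (hf : IntervalIntegrable f volume 0 t) :
    logFlow K C₀ (∫ r in 0..t, f r) w - w =
      ∫ r in 0..t, C₀ * f r * (logFlow K C₀ (∫ v in 0..r, f v) w *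
        (K - log (logFlow K C₀ (∫ v in 0..r, f v) w))) := by
  have h := intervalIntegral.integral_comp_primitive_mul hf (hasDerivAt_logFlow hw K C₀)
    ((continuous_logFlow_mul_sub_log hw K C₀).const_mul C₀)
  rw [logFlow_time_zero] at h
  rw [← h]
  congr 1 with r
  ring

theorem continuousOn_logFlow_primitive (hf : IntervalIntegrable f volume 0 T) (hw : 0 < w) :
    ContinuousOn (fun t => logFlow K C₀ (∫ r in 0..t, f r) w) (Icc 0 T) :=
  (continuous_logFlow_time hw K C₀).comp_continuousOn
    ((intervalIntegral.continuousOn_primitive_interval' hf left_mem_uIcc).mono Icc_subset_uIcc)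

theorem integrableOn_mul_mul_sub_log {Z : ℝ → ℝ} (hf : IntervalIntegrable f volume 0 T)
    (hZ : ContinuousOn Z (Icc 0 T)) :
    IntegrableOn (fun r => C₀ * f r * (Z r * (K - log (Z r)))) (Ioc 0 T) := by
  have hf' : IntegrableOn f (Icc 0 T) := (integrableOn_Icc_iff_integrableOn_Ioc).2 hf.1
  exact (IntegrableOn.mul_continuousOn (hf'.const_mul C₀)
    ((continuous_mul_sub_log K).comp_continuousOn hZ) isCompact_Icc).mono_set Ioc_subset_Icc_self

end primitive

section comparison

variable {f : ℝ → ℝ} {K C₀ T w : ℝ}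

theorem lt_logFlow_of_subsolution (hK : 0 ≤ K) (hC₀ : 0 ≤ C₀)
    (hf : IntervalIntegrable f volume 0 T) (hf₀ : ∀ᵐ r ∂(volume.restrict (Ioc 0 T)), 0 ≤ f r)
    {X : ℝ → ℝ} (hX_cont : ContinuousOn X (Icc 0 T))
    (hX_range : ∀ t ∈ Icc 0 T, X t ∈ Icc 0 (exp (-1)))
    (hX : ∀ t ∈ Icc 0 T, X t - X 0 ≤ ∫ r in Ioc 0 t, C₀ * f r * (X r * (K - log (X r))))
    (hXw : X 0 < w) (hw : w ≤ 1) :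
    ∀ t ∈ Icc 0 T, X t < logFlow K C₀ (∫ r in 0..t, f r) w := by
  intro t ht
  have hw₀ : 0 < w := (hX_range 0 ⟨le_rfl, ht.1.trans ht.2⟩).1.trans_lt hXw
  rcases lt_or_ge (exp (-1)) (logFlow K C₀ (∫ r in 0..t, f r) w) with hDt | hDt
  · exact (hX_range t ht).2.trans_lt hDt
  have hsub : Icc 0 t ⊆ Icc 0 T := Icc_subset_Icc_right ht.2
  have hf_t : IntervalIntegrable f volume 0 t :=
    hf.mono_set (uIcc_subset_uIcc left_mem_uIcc (Icc_subset_uIcc ht))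
  have hf₀_t : ∀ᵐ r ∂(volume.restrict (Ioc 0 t)), 0 ≤ f r :=
    ae_restrict_of_ae_restrict_of_subset (Ioc_subset_Ioc_right ht.2) hf₀
  have hD_le : ∀ s ∈ Icc 0 t, logFlow K C₀ (∫ r in 0..s, f r) w ≤ exp (-1) := fun s hs =>
    (monotone_logFlow_time hC₀ hw₀ (hw.trans (one_le_exp hK))
      (intervalIntegral.integral_mono_interval le_rfl hs.1 hs.2 hf₀_t hf_t)).trans hDt
  have hD_cont := continuousOn_logFlow_primitive (K := K) (C₀ := C₀) hf_t hw₀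
  refine subsolution_lt_supersolution (ρ := fun r => C₀ * f r) (g := fun v => v * (K - log v))
    ?_ (monotoneOn_mul_sub_log hK)
    (fun v hv => mul_sub_log_nonneg hK hv.1 (hv.2.trans exp_neg_one_lt_one.le))
    (hX_cont.mono hsub) hD_cont (fun s hs => (hX_range s (hsub hs)).1) hD_le
    (integrableOn_mul_mul_sub_log hf_t hD_cont) (fun s hs => hX s (hsub hs)) (fun s hs => ?_)
    (by simpa using hXw) t ⟨ht.1, le_rfl⟩
  · filter_upwards [hf₀_t] with r hr using mul_nonneg hC₀ hr
  · rw [intervalIntegral.integral_same, logFlow_time_zero, logFlow_primitive_sub hw₀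
      (hf_t.mono_set (uIcc_subset_uIcc left_mem_uIcc (Icc_subset_uIcc hs))),
      intervalIntegral.integral_of_le hs.1]

theorem le_logFlow_of_subsolution (hK : 0 ≤ K) (hC₀ : 0 ≤ C₀)
    (hf : IntervalIntegrable f volume 0 T) (hf₀ : ∀ᵐ r ∂(volume.restrict (Ioc 0 T)), 0 ≤ f r)
    {X : ℝ → ℝ} (hX_cont : ContinuousOn X (Icc 0 T))
    (hX_range : ∀ t ∈ Icc 0 T, X t ∈ Icc 0 (exp (-1)))
    (hX : ∀ t ∈ Icc 0 T, X t - X 0 ≤ ∫ r in Ioc 0 t, C₀ * f r * (X r * (K - log (X r))))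
    {b : ℝ} (hXb : X 0 ≤ b) (hb : b < 1) :
    ∀ t ∈ Icc 0 T, X t ≤ logFlow K C₀ (∫ r in 0..t, f r) b := by
  intro t ht
  refine ge_of_tendsto ((continuous_logFlow K C₀ _).continuousWithinAt (s := Ioi b)) ?_
  filter_upwards [Ioo_mem_nhdsGT hb] with w hw
  exact (lt_logFlow_of_subsolution hK hC₀ hf hf₀ hX_cont hX_range hX (hXb.trans_lt hw.1)
    hw.2.le t ht).le

theorem logFlow_lt_of_supersolution (hK : 0 ≤ K) (hC₀ : 0 ≤ C₀)
    (hf : IntervalIntegrable f volume 0 T) (hf₀ : ∀ᵐ r ∂(volume.restrict (Ioc 0 T)), 0 ≤ f r)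
    {B : ℝ → ℝ} (hB_cont : ContinuousOn B (Icc 0 T))
    (hB_range : ∀ t ∈ Icc 0 T, B t ∈ Icc 0 (exp (-1)))
    (hB : ∀ t ∈ Icc 0 T, ∫ r in Ioc 0 t, C₀ * f r * (B r * (K - log (B r))) ≤ B t - B 0)
    (hw : 0 < w) (hwB : w < B 0) :
    ∀ t ∈ Icc 0 T, logFlow K C₀ (∫ r in 0..t, f r) w < B t :=
  subsolution_lt_supersolution (ρ := fun r => C₀ * f r) (g := fun v => v * (K - log v))
    (by filter_upwards [hf₀] with r hr using mul_nonneg hC₀ hr) (monotoneOn_mul_sub_log hK)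
    (fun v hv => mul_sub_log_nonneg hK hv.1 (hv.2.trans exp_neg_one_lt_one.le))
    (continuousOn_logFlow_primitive hf hw) hB_cont (fun _ _ => logFlow_nonneg hw.le)
    (fun t ht => (hB_range t ht).2) (integrableOn_mul_mul_sub_log hf hB_cont)
    (fun t ht => by
      rw [intervalIntegral.integral_same, logFlow_time_zero, logFlow_primitive_sub hw
        (hf.mono_set (uIcc_subset_uIcc left_mem_uIcc (Icc_subset_uIcc ht))),
        intervalIntegral.integral_of_le ht.1])
    hB (by simpa using hwB)

theorem logFlow_le_of_supersolution (hK : 0 ≤ K) (hC₀ : 0 ≤ C₀)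
    (hf : IntervalIntegrable f volume 0 T) (hf₀ : ∀ᵐ r ∂(volume.restrict (Ioc 0 T)), 0 ≤ f r)
    {B : ℝ → ℝ} (hB_cont : ContinuousOn B (Icc 0 T))
    (hB_range : ∀ t ∈ Icc 0 T, B t ∈ Icc 0 (exp (-1)))
    (hB : ∀ t ∈ Icc 0 T, ∫ r in Ioc 0 t, C₀ * f r * (B r * (K - log (B r))) ≤ B t - B 0) :
    ∀ t ∈ Icc 0 T, logFlow K C₀ (∫ r in 0..t, f r) (B 0) ≤ B t := by
  intro t ht
  rcases (hB_range 0 ⟨le_rfl, ht.1.trans ht.2⟩).1.eq_or_lt with hB0 | hB0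
  · rw [← hB0, logFlow_zero]
    exact (hB_range t ht).1
  refine le_of_tendsto ((continuous_logFlow K C₀ _).continuousWithinAt (s := Iio (B 0))) ?_
  filter_upwards [Ioo_mem_nhdsLT hB0] with w hw
  exact (logFlow_lt_of_supersolution hK hC₀ hf hf₀ hB_cont hB_range hB hw.1 hw.2 t ht).le

end comparison

/-- **comparison lemma.** Let `T₁ > 0`, `f ∈ L¹(0,T₁)` with `f ≥ 0` a.e.,
`K ≥ 0`, `C₀ > 0`.  Let `X, B : [0,T₁] → [0, e⁻¹]` be absolutely continuous with
`X 0 ≤ B 0`, `X' ≤ C₀ f X (|ln X| + K)` a.e. and `B' = C₀ f B (|ln B| + K)` a.e.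
(with the convention `0 · |ln 0| = 0`, automatic since `Real.log 0 = 0`); absolute
continuity together with the a.e. differential (in)equality is expressed in the
equivalent integral form.  Then `X ≤ B` on `[0,T₁]`. -/
theorem comparison_log_ode (T₁ : ℝ) (hT₁ : 0 < T₁) (f : ℝ → ℝ)
    (hf_int : IntegrableOn f (Ioo 0 T₁))
    (hf_nonneg : ∀ᵐ s ∂(volume.restrict (Ioo 0 T₁)), 0 ≤ f s)
    (K C₀ : ℝ) (hK : 0 ≤ K) (hC₀ : 0 < C₀)
    (X B : ℝ → ℝ)
    (hX_cont : ContinuousOn X (Icc 0 T₁)) (hB_cont : ContinuousOn B (Icc 0 T₁))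
    (hX_range : ∀ t ∈ Icc (0 : ℝ) T₁, X t ∈ Icc (0 : ℝ) (Real.exp (-1)))
    (hB_range : ∀ t ∈ Icc (0 : ℝ) T₁, B t ∈ Icc (0 : ℝ) (Real.exp (-1)))
    (h0 : X 0 ≤ B 0)
    (hX : ∀ s t : ℝ, 0 ≤ s → s ≤ t → t ≤ T₁ →
      X t - X s ≤ ∫ r in Ioc s t, C₀ * f r * (X r * (|Real.log (X r)| + K)))
    (hB : ∀ t ∈ Icc (0 : ℝ) T₁,
      B t = B 0 + ∫ r in Ioc (0 : ℝ) t, C₀ * f r * (B r * (|Real.log (B r)| + K))) :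
    ∀ t ∈ Icc (0 : ℝ) T₁, X t ≤ B t := by
  have hf : IntervalIntegrable f volume 0 T₁ :=
    (intervalIntegrable_iff_integrableOn_Ioo_of_le hT₁.le).2 hf_int
  have hf₀ : ∀ᵐ r ∂(volume.restrict (Ioc 0 T₁)), 0 ≤ f r := by
    rwa [← Measure.restrict_congr_set Ioo_ae_eq_Ioc]
  have hle_one {Z : ℝ → ℝ} (hZ : ∀ t ∈ Icc 0 T₁, Z t ∈ Icc 0 (exp (-1))) {t : ℝ} (ht : t ≤ T₁) :
      ∀ r ∈ Ioc 0 t, Z r ∈ Icc 0 1 := fun r hr =>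
    Icc_subset_Icc_right exp_neg_one_lt_one.le (hZ r ⟨hr.1.le, hr.2.trans ht⟩)
  have hX' : ∀ t ∈ Icc 0 T₁, X t - X 0 ≤ ∫ r in Ioc 0 t, C₀ * f r * (X r * (K - log (X r))) :=
    fun t ht => (hX 0 t le_rfl ht.1 ht.2).trans_eq
      (setIntegral_mul_abs_log_add (hle_one hX_range ht.2))
  have hB' : ∀ t ∈ Icc 0 T₁, ∫ r in Ioc 0 t, C₀ * f r * (B r * (K - log (B r))) ≤ B t - B 0 :=
    fun t ht => by
      rw [← setIntegral_mul_abs_log_add (hle_one hB_range ht.2), hB t ht, add_sub_cancel_left]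
  have hB0 : B 0 < 1 := (hB_range 0 ⟨le_rfl, hT₁.le⟩).2.trans_lt exp_neg_one_lt_one
  intro t ht
  exact (le_logFlow_of_subsolution hK hC₀.le hf hf₀ hX_cont hX_range hX' h0 hB0 t ht).trans
    (logFlow_le_of_supersolution hK hC₀.le hf hf₀ hB_cont hB_range hB' t ht)
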